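/- arXiv:1412.1993 — 5 statements merged into one kernel-verified Lean document; each statement's English description precedes it below -/
import Mathlib

section
/- Let X_1, X_2 be independent discrete random variables (possibly conditionally on a variable S), and let Y, Z be further discrete random variables. Then I(X_1; X_2 | S) = 0 implies that the difference h(A_1) + h(A_2) − h(A_1 ∪ A_2) − h(A_1 ∩ A_2), expressed via conditional mutual informations as I(X_1; X_2 | S, Y) + I(W_1; X_2 | X_1, S, Y) + I(W_2; W_1, X_1 | X_2, S, Y) − I(X_1; X_2 | S), is nonnegative for any discrete random variables W_1, W_2. -/
/-!
The subtracted term vanishes by hypothesis and the other three are conditional mutual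
informations, so it suffices that `I(f; g | h) ≥ 0`. This holds because `I(f; g | h)` is the
relative entropy of the law of `(f, g, h)` from the coupling in which `f` and `g` are
conditionally independent given `h` with the same `(f, h)` and `(g, h)` marginals, and relative
entropy is nonnegative by Gibbs' inequality (`log x ≥ 1 - x⁻¹`).
-/

open scoped BigOperators

/-- Probability mass of `f ω = b` under the pmf `p` on the finite sample space `Ω`. -/
noncomputable def pdist {Ω β : Type*} [Fintype Ω] [DecidableEq β]
    (p : Ω → ℝ) (f : Ω → β) (b : β) : ℝ :=
  ∑ ω, if f ω = b then p ω else 0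

/-- Shannon entropy of the finite-valued random variable `f` under the pmf `p`. -/
noncomputable def entropy {Ω β : Type*} [Fintype Ω] [Fintype β] [DecidableEq β]
    (p : Ω → ℝ) (f : Ω → β) : ℝ :=
  -∑ b, pdist p f b * Real.log (pdist p f b)

/-- Conditional Shannon entropy `H(f | g)`. -/
noncomputable def condEntropy {Ω β γ : Type*} [Fintype Ω] [Fintype β] [DecidableEq β]
    [Fintype γ] [DecidableEq γ] (p : Ω → ℝ) (f : Ω → β) (g : Ω → γ) : ℝ :=
  entropy p (fun ω => (f ω, g ω)) - entropy p g

/-- Conditional mutual information `I(f ; g | h)`. -/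
noncomputable def condMI {Ω β γ δ : Type*} [Fintype Ω] [Fintype β] [DecidableEq β]
    [Fintype γ] [DecidableEq γ] [Fintype δ] [DecidableEq δ]
    (p : Ω → ℝ) (f : Ω → β) (g : Ω → γ) (h : Ω → δ) : ℝ :=
  condEntropy p f h + condEntropy p g h - condEntropy p (fun ω => (f ω, g ω)) h

/-- The tuple of random variables `{X i : i ∈ A}`, encoded as a masked vector. -/
def masked {Ω 𝒳 : Type*} {n : ℕ} (X : Fin n → Ω → 𝒳) (A : Finset (Fin n)) (ω : Ω) :
    Fin n → Option 𝒳 :=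
  fun i => if i ∈ A then some (X i ω) else none

open Real

section

variable {Ω τ : Type*} [Fintype Ω] [DecidableEq τ]

lemma pdist_nonneg {p : Ω → ℝ} (hp0 : ∀ ω, 0 ≤ p ω) (F : Ω → τ) (t : τ) :
    0 ≤ pdist p F t :=
  Finset.sum_nonneg fun ω _ => by split_ifs <;> simp [hp0 ω]

lemma le_pdist_apply {p : Ω → ℝ} (hp0 : ∀ ω, 0 ≤ p ω) (F : Ω → τ) (ω : Ω) :
    p ω ≤ pdist p F (F ω) := by
  have := Finset.single_le_sum (f := fun ω' => if F ω' = F ω then p ω' else 0)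
    (fun ω' _ => by split_ifs <;> simp [hp0 ω']) (Finset.mem_univ ω)
  simpa [pdist] using this

lemma pdist_apply_pos {p : Ω → ℝ} (hp0 : ∀ ω, 0 ≤ p ω) (F : Ω → τ) {ω : Ω} (hω : 0 < p ω) :
    0 < pdist p F (F ω) :=
  hω.trans_le (le_pdist_apply hp0 F ω)

lemma sum_pdist_prod_fst {β : Type*} [Fintype β] [DecidableEq β]
    (p : Ω → ℝ) (F : Ω → β) (G : Ω → τ) (t : τ) :
    ∑ b, pdist p (fun ω => (F ω, G ω)) (b, t) = pdist p G t := by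
  unfold pdist
  rw [Finset.sum_comm]
  refine Finset.sum_congr rfl fun ω _ => ?_
  by_cases h : G ω = t <;> simp [h, Prod.ext_iff]

variable [Fintype τ]

lemma sum_mul_comp_eq_sum_pdist_mul (p : Ω → ℝ) (F : Ω → τ) (φ : τ → ℝ) :
    ∑ ω, p ω * φ (F ω) = ∑ t, pdist p F t * φ t := by
  simp_rw [pdist, Finset.sum_mul, ite_mul, zero_mul]
  rw [Finset.sum_comm]
  simp

lemma sum_pdist (p : Ω → ℝ) (F : Ω → τ) : ∑ t, pdist p F t = ∑ ω, p ω := by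
  simpa using (sum_mul_comp_eq_sum_pdist_mul p F 1).symm

lemma entropy_eq_sum (p : Ω → ℝ) (F : Ω → τ) :
    entropy p F = -∑ ω, p ω * log (pdist p F (F ω)) := by
  rw [entropy, sum_mul_comp_eq_sum_pdist_mul p F (fun t => log (pdist p F t))]

/-- Gibbs' inequality `D(q ‖ r) ≥ ∑ q - ∑ r` for `q` the law of `F`, with the divergence written
as an expectation over the sample space. -/
lemma sum_sub_sum_le_sum_mul_log_sub {p : Ω → ℝ} (hp0 : ∀ ω, 0 ≤ p ω) (F : Ω → τ)
    {r : τ → ℝ} (hr0 : ∀ t, 0 ≤ r t) (hr : ∀ ω, 0 < p ω → 0 < r (F ω)) :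
    ∑ ω, p ω - ∑ t, r t ≤ ∑ ω, p ω * (log (pdist p F (F ω)) - log (r (F ω))) := by
  set q := pdist p F
  have hpointwise :
      ∀ ω, p ω * (1 - r (F ω) / q (F ω)) ≤ p ω * (log (q (F ω)) - log (r (F ω))) := by
    intro ω
    rcases (hp0 ω).eq_or_lt with hω | hω
    · simp [← hω]
    have hq := pdist_apply_pos hp0 F hω
    have hr := hr ω hω
    refine mul_le_mul_of_nonneg_left ?_ hω.le
    rw [← log_div hq.ne' hr.ne', ← inv_div]
    exact one_sub_inv_le_log_of_pos (div_pos hq hr)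
  have hcoupling : ∑ t, q t * (r t / q t) ≤ ∑ t, r t := by
    refine Finset.sum_le_sum fun t _ => ?_
    rcases eq_or_ne (q t) 0 with h0 | h0
    · simp [h0, hr0 t]
    · rw [mul_div_cancel₀ _ h0]
  calc ∑ ω, p ω - ∑ t, r t
      ≤ ∑ ω, p ω - ∑ t, q t * (r t / q t) := by linarith
    _ = ∑ ω, p ω * (1 - r (F ω) / q (F ω)) := by
      simp_rw [mul_one_sub, Finset.sum_sub_distrib,
        sum_mul_comp_eq_sum_pdist_mul p F (fun t => r t / q t)]
      rfl
    _ ≤ _ := Finset.sum_le_sum fun ω _ => hpointwise ω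

end

section

variable {Ω β γ δ : Type*} [Fintype Ω] [DecidableEq β] [DecidableEq γ] [DecidableEq δ]

/-- The mass function of `(f, g, h)` under which `f` and `g` are conditionally independent
given `h`, with the same pair marginals `(f, h)` and `(g, h)` as under `p`. -/
noncomputable def condIndepMass (p : Ω → ℝ) (f : Ω → β) (g : Ω → γ) (h : Ω → δ)
    (t : (β × γ) × δ) : ℝ :=
  pdist p (fun ω => (f ω, h ω)) (t.1.1, t.2) * pdist p (fun ω => (g ω, h ω)) (t.1.2, t.2)
    / pdist p h t.2

lemma condIndepMass_nonneg {p : Ω → ℝ} (hp0 : ∀ ω, 0 ≤ p ω) (f : Ω → β) (g : Ω → γ)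
    (h : Ω → δ) (t : (β × γ) × δ) : 0 ≤ condIndepMass p f g h t :=
  div_nonneg (mul_nonneg (pdist_nonneg hp0 _ _) (pdist_nonneg hp0 _ _)) (pdist_nonneg hp0 _ _)

lemma log_condIndepMass {p : Ω → ℝ} (hp0 : ∀ ω, 0 ≤ p ω) (f : Ω → β) (g : Ω → γ)
    (h : Ω → δ) {ω : Ω} (hω : 0 < p ω) :
    log (condIndepMass p f g h ((f ω, g ω), h ω))
      = log (pdist p (fun ω => (f ω, h ω)) (f ω, h ω))
        + log (pdist p (fun ω => (g ω, h ω)) (g ω, h ω)) - log (pdist p h (h ω)) := by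
  have hfh := pdist_apply_pos hp0 (fun ω => (f ω, h ω)) hω
  have hgh := pdist_apply_pos hp0 (fun ω => (g ω, h ω)) hω
  have hh := pdist_apply_pos hp0 h hω
  rw [condIndepMass, log_div (by positivity) hh.ne', log_mul hfh.ne' hgh.ne']

variable [Fintype β] [Fintype γ] [Fintype δ]

lemma sum_condIndepMass (p : Ω → ℝ) (f : Ω → β) (g : Ω → γ) (h : Ω → δ) :
    ∑ t, condIndepMass p f g h t = ∑ ω, p ω := by
  rw [Fintype.sum_prod_type_right, ← sum_pdist p h]
  refine Finset.sum_congr rfl fun d _ => ?_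
  simp_rw [condIndepMass, Fintype.sum_prod_type, ← Finset.sum_div, ← Finset.sum_mul_sum,
    sum_pdist_prod_fst, mul_self_div_self]

lemma condMI_eq_sum (p : Ω → ℝ) (f : Ω → β) (g : Ω → γ) (h : Ω → δ) :
    condMI p f g h = ∑ ω, p ω *
      (log (pdist p (fun ω => ((f ω, g ω), h ω)) ((f ω, g ω), h ω)) + log (pdist p h (h ω))
        - log (pdist p (fun ω => (f ω, h ω)) (f ω, h ω))
        - log (pdist p (fun ω => (g ω, h ω)) (g ω, h ω))) := by
  simp only [condMI, condEntropy, entropy_eq_sum, mul_add, mul_sub, Finset.sum_sub_distrib,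
    Finset.sum_add_distrib]
  ring

lemma condMI_nonneg {p : Ω → ℝ} (hp0 : ∀ ω, 0 ≤ p ω) (f : Ω → β) (g : Ω → γ) (h : Ω → δ) :
    0 ≤ condMI p f g h := by
  have hr : ∀ ω, 0 < p ω → 0 < condIndepMass p f g h ((f ω, g ω), h ω) := fun ω hω =>
    div_pos (mul_pos (pdist_apply_pos hp0 _ hω) (pdist_apply_pos hp0 _ hω))
      (pdist_apply_pos hp0 h hω)
  calc 0 = ∑ ω, p ω - ∑ t, condIndepMass p f g h t := by rw [sum_condIndepMass, sub_self]
    _ ≤ _ := sum_sub_sum_le_sum_mul_log_sub hp0 (fun ω => ((f ω, g ω), h ω))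
        (condIndepMass_nonneg hp0 f g h) hr
    _ = condMI p f g h := by
      rw [condMI_eq_sum]
      refine Finset.sum_congr rfl fun ω _ => ?_
      rcases (hp0 ω).eq_or_lt with hω | hω
      · simp [← hω]
      · rw [log_condIndepMass hp0 f g h hω]
        ring

end

theorem key_inequality_general {Ω 𝒳₁ 𝒳₂ 𝒮 𝒴 𝒲₁ 𝒲₂ : Type*} [Fintype Ω]
    [Fintype 𝒳₁] [DecidableEq 𝒳₁] [Fintype 𝒳₂] [DecidableEq 𝒳₂]
    [Fintype 𝒮] [DecidableEq 𝒮] [Fintype 𝒴] [DecidableEq 𝒴]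
    [Fintype 𝒲₁] [DecidableEq 𝒲₁] [Fintype 𝒲₂] [DecidableEq 𝒲₂]
    (p : Ω → ℝ) (hp0 : ∀ ω, 0 ≤ p ω)
    (X₁ : Ω → 𝒳₁) (X₂ : Ω → 𝒳₂) (S : Ω → 𝒮) (Y : Ω → 𝒴)
    (W₁ : Ω → 𝒲₁) (W₂ : Ω → 𝒲₂)
    (hindep : condMI p X₁ X₂ S = 0) :
    0 ≤ condMI p X₁ X₂ (fun ω => (S ω, Y ω))
      + condMI p W₁ X₂ (fun ω => (X₁ ω, S ω, Y ω))
      + condMI p W₂ (fun ω => (W₁ ω, X₁ ω)) (fun ω => (X₂ ω, S ω, Y ω))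
      - condMI p X₁ X₂ S := by
  rw [hindep, sub_zero]
  have := condMI_nonneg hp0 X₁ X₂ (fun ω => (S ω, Y ω))
  have := condMI_nonneg hp0 W₁ X₂ (fun ω => (X₁ ω, S ω, Y ω))
  have := condMI_nonneg hp0 W₂ (fun ω => (W₁ ω, X₁ ω)) (fun ω => (X₂ ω, S ω, Y ω))
  linarith

/-- The key inequality used to prove submodularity of the cut-set function under
independent inputs: if `I(X₁; X₂ | S) = 0` then the combination of conditional
mutual informations expressing `h(A₁)+h(A₂)−h(A₁∪A₂)−h(A₁∩A₂)` is nonnegative. -/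
theorem key_inequality {Ω 𝒳₁ 𝒳₂ 𝒮 𝒴 𝒲₁ 𝒲₂ : Type*} [Fintype Ω]
    [Fintype 𝒳₁] [DecidableEq 𝒳₁] [Fintype 𝒳₂] [DecidableEq 𝒳₂]
    [Fintype 𝒮] [DecidableEq 𝒮] [Fintype 𝒴] [DecidableEq 𝒴]
    [Fintype 𝒲₁] [DecidableEq 𝒲₁] [Fintype 𝒲₂] [DecidableEq 𝒲₂]
    (p : Ω → ℝ) (hp0 : ∀ ω, 0 ≤ p ω) (hp1 : ∑ ω, p ω = 1)
    (X₁ : Ω → 𝒳₁) (X₂ : Ω → 𝒳₂) (S : Ω → 𝒮) (Y : Ω → 𝒴)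
    (W₁ : Ω → 𝒲₁) (W₂ : Ω → 𝒲₂)
    (hindep : condMI p X₁ X₂ S = 0) :
    0 ≤ condMI p X₁ X₂ (fun ω => (S ω, Y ω))
      + condMI p W₁ X₂ (fun ω => (X₁ ω, S ω, Y ω))
      + condMI p W₂ (fun ω => (W₁ ω, X₁ ω)) (fun ω => (X₂ ω, S ω, Y ω))
      - condMI p X₁ X₂ S :=
  key_inequality_general p hp0 X₁ X₂ S Y W₁ W₂ hindep
end

section
/- Let f be a submodular set function on subsets of [1:N] with f(∅) = 0, and let f̂ be its Lovász extension defined by f̂(w) = max{wᵀx : x ∈ P(f)} where P(f) = {x ∈ ℝᴺ : Σ_{i∈A} x_i ≤ f(A) for all A ⊆ [1:N]}. Then for any weight vector w ∈ ℝᴺ with w_{π_1} ≥ … ≥ w_{π_N} for a permutation π, the vector x with components x_{π_i} = f({π_1,…,π_i}) − f({π_1,…,π_{i−1}}) lies in P(f). -/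
/-- A set function on subsets of `Fin N` is submodular if
`f A + f B ≥ f (A ∪ B) + f (A ∩ B)` for all `A, B`. -/
def Submodular {N : ℕ} (f : Finset (Fin N) → ℝ) : Prop :=
  ∀ A B : Finset (Fin N), f (A ∪ B) + f (A ∩ B) ≤ f A + f B

/-- The submodular polyhedron `P(f) = {x : ∑_{i∈A} x i ≤ f A for all A}`. -/
def submodularPolyhedron {N : ℕ} (f : Finset (Fin N) → ℝ) : Set (Fin N → ℝ) :=
  {x | ∀ A : Finset (Fin N), ∑ i ∈ A, x i ≤ f A}

/-- The Lovász extension `f̂(w) = sup {wᵀx : x ∈ P(f)}`. -/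
noncomputable def lovasz {N : ℕ} (f : Finset (Fin N) → ℝ) (w : Fin N → ℝ) : ℝ :=
  sSup ((fun x => ∑ i, w i * x i) '' submodularPolyhedron f)

/-- The prefix set `{π_1, …, π_k}` of a permutation `π` of `Fin N`. -/
def prefixSet {N : ℕ} (π : Equiv.Perm (Fin N)) (k : ℕ) : Finset (Fin N) :=
  Finset.univ.filter (fun j => (π.symm j : ℕ) < k)

/-!
Adding an element `i ∉ S` to a set `A ⊆ S` gains at least as much as adding it to `S`
(diminishing returns). Hence, inducting along the prefix sets `S_k = prefixSet π k`,
every `A ⊆ S_{k+1}` containing `π k` satisfies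
`∑_{A} x = x (π k) + ∑_{A \ π k} x ≤ (f S_{k+1} - f S_k) + f (A \ π k) ≤ f A`.
-/

open Finset

theorem Submodular.sub_le_sub_of_subset {N : ℕ} {f : Finset (Fin N) → ℝ} (hsub : Submodular f)
    {A S : Finset (Fin N)} {i : Fin N} (hAS : A ⊆ S) (hi : i ∉ S) :
    f (insert i S) - f S ≤ f (insert i A) - f A := by
  have h := hsub (insert i A) S
  rw [insert_union, union_eq_right.mpr hAS, insert_inter_of_notMem hi,
    inter_eq_left.mpr hAS] at h
  linarith

section prefixSet

variable {N : ℕ} (π : Equiv.Perm (Fin N))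

@[simp]
theorem mem_prefixSet {j : Fin N} {k : ℕ} : j ∈ prefixSet π k ↔ (π.symm j : ℕ) < k := by
  simp [prefixSet]

theorem prefixSet_zero : prefixSet π 0 = ∅ := by
  ext j
  simp

theorem prefixSet_of_le {k : ℕ} (hk : N ≤ k) : prefixSet π k = univ := by
  ext j
  simpa using (π.symm j).isLt.trans_le hk

theorem apply_notMem_prefixSet (i : Fin N) : π i ∉ prefixSet π i := by
  simp

theorem prefixSet_succ (i : Fin N) : prefixSet π (i + 1) = insert (π i) (prefixSet π i) := by
  ext j
  rw [mem_insert, mem_prefixSet, mem_prefixSet, Nat.lt_succ_iff_lt_or_eq, Fin.val_inj,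
    π.symm_apply_eq, or_comm]

end prefixSet

theorem sum_le_of_subset_prefixSet {N : ℕ} {f : Finset (Fin N) → ℝ}
    (hsub : Submodular f) (h0 : f ∅ = 0) (π : Equiv.Perm (Fin N)) (x : Fin N → ℝ)
    (hx : ∀ i : Fin N, x (π i) = f (prefixSet π ((i : ℕ) + 1)) - f (prefixSet π (i : ℕ)))
    {k : ℕ} (hk : k ≤ N) {A : Finset (Fin N)} (hA : A ⊆ prefixSet π k) :
    ∑ j ∈ A, x j ≤ f A := by
  induction k generalizing A with
  | zero =>
    rw [prefixSet_zero, subset_empty] at hA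
    simp [hA, h0]
  | succ k ih =>
    set i : Fin N := ⟨k, hk⟩
    have hA' : A.erase (π i) ⊆ prefixSet π i := by
      rw [← subset_insert_iff, ← prefixSet_succ]
      exact hA
    by_cases hiA : π i ∈ A
    · have hgain := hsub.sub_le_sub_of_subset hA' (apply_notMem_prefixSet π i)
      rw [← prefixSet_succ, insert_erase hiA, ← hx] at hgain
      calc ∑ j ∈ A, x j = x (π i) + ∑ j ∈ A.erase (π i), x j := (add_sum_erase A x hiA).symm
        _ ≤ x (π i) + f (A.erase (π i)) := by gcongr; exact ih (by omega) hA'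
        _ ≤ f A := by linarith
    · rw [erase_eq_of_notMem hiA] at hA'
      exact ih (by omega) hA'

theorem greedy_feasible_general {N : ℕ} (f : Finset (Fin N) → ℝ)
    (hsub : Submodular f) (h0 : f ∅ = 0)
    (π : Equiv.Perm (Fin N))
    (x : Fin N → ℝ)
    (hx : ∀ i : Fin N, x (π i) = f (prefixSet π ((i : ℕ) + 1)) - f (prefixSet π (i : ℕ))) :
    x ∈ submodularPolyhedron f := fun A =>
  sum_le_of_subset_prefixSet hsub h0 π x hx le_rfl
    (by rw [prefixSet_of_le π le_rfl]; exact subset_univ A)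

/-- Feasibility of the greedy vector: for a submodular `f` with `f ∅ = 0` and a weight
vector `w` ordered decreasingly along a permutation `π`, the greedy vector
`x (π i) = f({π_1,…,π_i}) − f({π_1,…,π_{i−1}})` lies in the submodular polyhedron. -/
theorem greedy_feasible {N : ℕ} (f : Finset (Fin N) → ℝ)
    (hsub : Submodular f) (h0 : f ∅ = 0)
    (π : Equiv.Perm (Fin N)) (w : Fin N → ℝ)
    (hw : ∀ i j : Fin N, i ≤ j → w (π j) ≤ w (π i))
    (x : Fin N → ℝ)
    (hx : ∀ i : Fin N, x (π i) = f (prefixSet π ((i : ℕ) + 1)) - f (prefixSet π (i : ℕ))) :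
    x ∈ submodularPolyhedron f :=
  greedy_feasible_general f hsub h0 π x hx
end

section
/- Let f be a submodular set function on subsets of [1:N] with f(∅) = 0, with Lovász extension f̂. Then the minimum of f over all subsets equals the minimum of f̂ over the cube [0,1]^N, and also equals the minimum of f̂ over the vertices {0,1}^N of the cube: min_{A ⊆ [1:N]} f(A) = min_{w ∈ [0,1]^N} f̂(w) = min_{w ∈ {0,1}^N} f̂(w). -/
open Finset Function

section Greedy

variable {α β : Type*} [LinearOrder β] {g : α → β} {a : α} {s : Finset α}

def IsInitial (g : α → β) (S : Finset α) : Prop :=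
  ∀ i ∈ S, ∀ j, g j < g i → j ∈ S

lemma IsInitial.of_insert [DecidableEq α] (hS : IsInitial g (insert a s))
    (hmax : ∀ i ∈ s, g i ≤ g a) : IsInitial g s := by
  intro i hi j hji
  rcases mem_insert.1 (hS i (mem_insert_of_mem hi) j hji) with rfl | hjs
  · exact absurd (hji.trans_le (hmax i hi)) (lt_irrefl _)
  · exact hjs

variable [Fintype α]

def predecessors (g : α → β) (i : α) : Finset α :=
  univ.filter fun j => g j < g i

lemma subset_predecessors (hg : Injective g) (ha : a ∉ s) (hmax : ∀ i ∈ s, g i ≤ g a) :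
    s ⊆ predecessors g a := by
  intro i hi
  simp only [predecessors, mem_filter, mem_univ, true_and]
  exact (hmax i hi).lt_of_ne (hg.ne (ne_of_mem_of_not_mem hi ha))

variable [DecidableEq α]

/-- Edmonds' greedy vector for the ranking `g`, smaller values of `g` coming first. -/
noncomputable def greedyVector (f : Finset α → ℝ) (g : α → β) (i : α) : ℝ :=
  f (insert i (predecessors g i)) - f (predecessors g i)

lemma IsInitial.predecessors_eq (hS : IsInitial g (insert a s)) (hg : Injective g) (ha : a ∉ s)
    (hmax : ∀ i ∈ s, g i ≤ g a) : predecessors g a = s := by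
  refine Subset.antisymm (fun j hj => ?_) (subset_predecessors hg ha hmax)
  have hja : g j < g a := (mem_filter.1 hj).2
  rcases mem_insert.1 (hS a (mem_insert_self a s) j hja) with rfl | hjs
  · exact absurd hja (lt_irrefl _)
  · exact hjs

lemma IsInitial.greedyVector_eq (f : Finset α → ℝ) (hS : IsInitial g (insert a s))
    (hg : Injective g) (ha : a ∉ s) (hmax : ∀ i ∈ s, g i ≤ g a) :
    greedyVector f g a = f (insert a s) - f s := by
  rw [greedyVector, hS.predecessors_eq hg ha hmax]

lemma sum_greedyVector_of_isInitial {f : Finset α → ℝ} (h0 : f ∅ = 0) (hg : Injective g)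
    {S : Finset α} (hS : IsInitial g S) : ∑ i ∈ S, greedyVector f g i = f S := by
  induction S using Finset.induction_on_max_value g with
  | empty => simp [h0]
  | insert a s ha hmax ih =>
    rw [sum_insert ha, ih (hS.of_insert hmax), hS.greedyVector_eq f hg ha hmax]
    ring

/-- Abel summation along the greedy order: lowering the weight level from `w a` to `t` changes
the bound by `(w a - t) (f S - m) ≥ 0`. -/
lemma le_sum_mul_greedyVector {f : Finset α → ℝ} {m : ℝ} (h0 : f ∅ = 0) (hm : ∀ S, m ≤ f S)
    (hm0 : m ≤ 0) (hg : Injective g) {w : α → ℝ} (hw1 : ∀ i, w i ≤ 1)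
    (hgw : ∀ i j, g j < g i → w i ≤ w j)
    {S : Finset α} (hS : IsInitial g S) {t : ℝ} (ht1 : t ≤ 1) (htw : ∀ i ∈ S, t ≤ w i) :
    t * f S + (1 - t) * m ≤ ∑ i ∈ S, w i * greedyVector f g i := by
  induction S using Finset.induction_on_max_value g generalizing t with
  | empty =>
    rw [h0, sum_empty]
    nlinarith
  | insert a s ha hmax ih =>
    have hwa : ∀ i ∈ s, w a ≤ w i := fun i hi =>
      hgw a i (mem_filter.1 (subset_predecessors hg ha hmax hi)).2
    have hs := ih (hS.of_insert hmax) (hw1 a) hwa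
    have hta : (w a - t) * (f (insert a s) - m) ≥ 0 :=
      mul_nonneg (by linarith [htw a (mem_insert_self a s)]) (by linarith [hm (insert a s)])
    rw [sum_insert ha, hS.greedyVector_eq f hg ha hmax]
    nlinarith

end Greedy

namespace Submodular

variable {N : ℕ} {f : Finset (Fin N) → ℝ}

lemma marginal_le_of_subset (hf : Submodular f) {s t : Finset (Fin N)} {a : Fin N}
    (hst : s ⊆ t) (hat : a ∉ t) : f (insert a t) - f t ≤ f (insert a s) - f s := by
  have h := hf (insert a s) t
  rw [insert_union, union_eq_right.2 hst, insert_inter_of_notMem hat,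
    inter_eq_left.2 hst] at h
  linarith

lemma greedyVector_mem_submodularPolyhedron {β : Type*} [LinearOrder β] (hf : Submodular f)
    (h0 : f ∅ = 0) {g : Fin N → β} (hg : Injective g) :
    greedyVector f g ∈ submodularPolyhedron f := by
  intro S
  induction S using Finset.induction_on_max_value g with
  | empty => simp [h0]
  | insert a s ha hmax ih =>
    have hsub := subset_predecessors hg ha hmax
    have hmarg := hf.marginal_le_of_subset (a := a) hsub (by simp [predecessors])
    rw [sum_insert ha, greedyVector]
    linarith

end Submodular

/-- Ranks by decreasing weight, breaking ties by the index so that the key is injective. -/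
def weightKey {α : Type*} [LinearOrder α] (w : α → ℝ) (i : α) : Lex (ℝ × α) :=
  toLex (-w i, i)

lemma weightKey_injective {α : Type*} [LinearOrder α] (w : α → ℝ) : Injective (weightKey w) :=
  fun _ _ h => congrArg Prod.snd (toLex.injective h)

lemma le_of_weightKey_lt {α : Type*} [LinearOrder α] {w : α → ℝ} {i j : α}
    (h : weightKey w j < weightKey w i) : w i ≤ w j :=
  neg_le_neg_iff.1 (Prod.Lex.toLex_lt_toLex'.1 h).1

lemma sum_indicator_mul {α R : Type*} [Fintype α] [NonAssocSemiring R] (A : Finset α)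
    (x : α → R) : ∑ i, (A : Set α).indicator 1 i * x i = ∑ i ∈ A, x i := by
  simp_rw [← Set.indicator_mul_left, Pi.one_apply, one_mul]
  exact sum_indicator_subset x (subset_univ A)

section Lovasz

variable {N : ℕ} {f : Finset (Fin N) → ℝ}

lemma bddAbove_image_submodularPolyhedron {w : Fin N → ℝ} (hw : 0 ≤ w) :
    BddAbove ((fun x => ∑ i, w i * x i) '' submodularPolyhedron f) := by
  refine ⟨∑ i, w i * f {i}, ?_⟩
  rintro y ⟨x, hx, rfl⟩
  refine sum_le_sum fun i _ => mul_le_mul_of_nonneg_left ?_ (hw i)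
  simpa using hx {i}

lemma le_lovasz {w x : Fin N → ℝ} (hw : 0 ≤ w) (hx : x ∈ submodularPolyhedron f) :
    ∑ i, w i * x i ≤ lovasz f w :=
  le_csSup (bddAbove_image_submodularPolyhedron hw) ⟨x, hx, rfl⟩

lemma lovasz_indicator (hf : Submodular f) (h0 : f ∅ = 0) (A : Finset (Fin N)) :
    lovasz f ((A : Set (Fin N)).indicator 1) = f A := by
  set w := (A : Set (Fin N)).indicator (1 : Fin N → ℝ)
  have hw : 0 ≤ w := Set.indicator_nonneg fun _ _ => zero_le_one
  have hx := hf.greedyVector_mem_submodularPolyhedron h0 (weightKey_injective w)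
  refine le_antisymm (csSup_le ⟨_, _, hx, rfl⟩ ?_) ?_
  · rintro y ⟨x, hx, rfl⟩
    simpa only [w, sum_indicator_mul] using hx A
  · have hA : IsInitial (weightKey w) A := fun i hi j hji => by
      by_contra hj
      exact absurd (le_of_weightKey_lt hji) (by simp [w, hi, hj])
    calc f A = ∑ i, w i * greedyVector f (weightKey w) i := by
          rw [sum_indicator_mul, sum_greedyVector_of_isInitial h0 (weightKey_injective w) hA]
      _ ≤ lovasz f w := le_lovasz hw hx

lemma sInf_range_le_lovasz (hf : Submodular f) (h0 : f ∅ = 0) {w : Fin N → ℝ}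
    (hw : w ∈ Set.Icc 0 1) : sInf (Set.range f) ≤ lovasz f w := by
  set m := sInf (Set.range f)
  have hm : ∀ S, m ≤ f S := fun S => csInf_le (Set.finite_range f).bddBelow ⟨S, rfl⟩
  have hg := weightKey_injective w
  calc m = 0 * f univ + (1 - 0) * m := by ring
    _ ≤ ∑ i, w i * greedyVector f (weightKey w) i :=
      le_sum_mul_greedyVector h0 hm (h0 ▸ hm ∅) hg hw.2 (fun _ _ => le_of_weightKey_lt)
        (fun _ _ _ _ => mem_univ _) zero_le_one (fun i _ => hw.1 i)
    _ ≤ lovasz f w := le_lovasz hw.1 (hf.greedyVector_mem_submodularPolyhedron h0 hg)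

lemma lovasz_image_vertices (hf : Submodular f) (h0 : f ∅ = 0) :
    lovasz f '' {w : Fin N → ℝ | ∀ i, w i = 0 ∨ w i = 1} = Set.range f := by
  ext y
  constructor
  · rintro ⟨w, hw, rfl⟩
    have hw_eq :
        ((univ.filter fun i => w i = 1 : Finset (Fin N)) : Set (Fin N)).indicator 1 = w := by
      funext i
      rcases hw i with h | h <;> simp [h]
    exact ⟨_, hw_eq ▸ (lovasz_indicator hf h0 _).symm⟩
  · rintro ⟨A, rfl⟩
    refine ⟨_, fun i => ?_, lovasz_indicator hf h0 A⟩
    by_cases hi : i ∈ A <;> simp [hi]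

end Lovasz

/-- The minimum of a submodular function equals the minimum of its Lovász extension over
the cube `[0,1]^N`, and also over the vertices `{0,1}^N` of the cube. -/
theorem min_submodular_eq_min_lovasz {N : ℕ} (f : Finset (Fin N) → ℝ)
    (hsub : Submodular f) (h0 : f ∅ = 0) :
    sInf (Set.range f) = sInf (lovasz f '' Set.Icc (0 : Fin N → ℝ) 1) ∧
    sInf (Set.range f) = sInf (lovasz f '' {w : Fin N → ℝ | ∀ i, w i = 0 ∨ w i = 1}) := by
  obtain ⟨A, hA⟩ : sInf (Set.range f) ∈ Set.range f :=
    (Set.range_nonempty f).csInf_mem (Set.finite_range f)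
  have hA_cube : (A : Set (Fin N)).indicator 1 ∈ Set.Icc (0 : Fin N → ℝ) 1 :=
    ⟨Set.indicator_nonneg fun _ _ => zero_le_one, Set.indicator_le_self' fun _ _ => zero_le_one⟩
  have hcube : IsLeast (lovasz f '' Set.Icc 0 1) (sInf (Set.range f)) :=
    ⟨⟨_, hA_cube, (lovasz_indicator hsub h0 A).trans hA⟩,
      by rintro _ ⟨w, hw, rfl⟩; exact sInf_range_le_lovasz hsub h0 hw⟩
  exact ⟨hcube.csInf_eq.symm, by rw [lovasz_image_vertices hsub h0]⟩
end

section
/- For the bilinear max-min problem max_λ min_{A ⊆ [1:N]} Σ_{s} λ_s f_s(A), where λ ranges over the probability simplex on 2^N states and f_s(A) ≥ 0 for all s and A, the optimal value is unchanged if the maximization is restricted to probability vectors λ with at most N+1 nonzero entries. -/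
/-! The value `V(λ) = min_A ∑_s λ_s f_s(A)` is upper semicontinuous, so it attains its maximum `v`
on the simplex; if `v = 0`, a point mass is optimal. Otherwise take an extreme point `λ` of the
compact set of maximizers. By submodularity the tight sets `A` (those with `∑_s λ_s f_s(A) = v`)
form a lattice on which every `λ_s f_s` is modular, and a modular function on a lattice of subsets
of an `N`-element set takes values in a space of dimension at most `N + 1`. If `λ` had more than
`N + 1` nonzero entries, some direction `e ≠ 0` supported on them would be orthogonal to all
`f(A)` with `A` tight. Since `v > 0`, moving along `e` must not change the total mass (otherwise
renormalising `λ + εe` would beat `v`), and then both `λ ± εe` are maximizers, contradicting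
extremality. -/

open Finset Matrix Filter Topology

section LinearAlgebra

variable {ι : Type*} [Fintype ι]

theorem exists_ne_zero_forall_dotProduct_eq_zero (W : Finset (ι → ℝ))
    (hW : #W < Fintype.card ι) : ∃ d ≠ 0, ∀ w ∈ W, w ⬝ᵥ d = 0 := by
  obtain ⟨d, hd, hd0⟩ := Submodule.exists_mem_ne_zero_of_ne_bot <|
    LinearMap.ker_ne_bot_of_finrank_lt (f := (Matrix.of fun w : W => (w : ι → ℝ)).mulVecLin)
      (by simpa using hW)
  exact ⟨d, hd0, fun w hw => congrFun (LinearMap.mem_ker.mp hd) ⟨w, hw⟩⟩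

theorem exists_ne_zero_support_subset_forall_dotProduct_eq_zero (S : Finset ι)
    (W : Finset (ι → ℝ)) (hW : #W < #S) :
    ∃ d ≠ 0, (∀ i ∉ S, d i = 0) ∧ ∀ w ∈ W, w ⬝ᵥ d = 0 := by
  classical
  obtain ⟨d, hd0, hd⟩ := exists_ne_zero_forall_dotProduct_eq_zero
    (W ∪ Sᶜ.image fun i => Pi.single i 1) <| calc
      _ ≤ #W + #Sᶜ := (card_union_le _ _).trans (Nat.add_le_add_left card_image_le _)
      _ < #S + #Sᶜ := by omega
      _ = Fintype.card ι := card_add_card_compl S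
  refine ⟨d, hd0, fun i hi => ?_, fun w hw => hd w (mem_union_left _ hw)⟩
  simpa using hd _ (mem_union_right _ (mem_image_of_mem _ (mem_compl.mpr hi)))

theorem dotProduct_eq_zero_of_mem_span {W : Finset (ι → ℝ)} {d w : ι → ℝ}
    (hd : ∀ t ∈ W, t ⬝ᵥ d = 0) (hw : w ∈ Submodule.span ℝ (W : Set (ι → ℝ))) : w ⬝ᵥ d = 0 := by
  induction hw using Submodule.span_induction with
  | mem t ht => exact hd t ht
  | zero => exact zero_dotProduct d
  | add _ _ _ _ h₁ h₂ => rw [add_dotProduct, h₁, h₂, add_zero]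
  | smul a _ _ h => rw [smul_dotProduct, h, smul_zero]

end LinearAlgebra

theorem IsSublattice.image_sup_right {L : Type*} [DistribLattice L] {M : Set L}
    (hM : IsSublattice M) (a : L) : IsSublattice ((· ⊔ a) '' M) where
  supClosed := by
    rintro _ ⟨A, hA, rfl⟩ _ ⟨B, hB, rfl⟩
    exact ⟨A ⊔ B, hM.supClosed hA hB, sup_sup_distrib_right A B a⟩
  infClosed := by
    rintro _ ⟨A, hA, rfl⟩ _ ⟨B, hB, rfl⟩
    exact ⟨A ⊓ B, hM.infClosed hA hB, sup_inf_right A B a⟩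

section ModularOnLattice

variable {α R V : Type*} [Fintype α] [DecidableEq α] [Ring R] [AddCommGroup V] [Module R V]

/-- Induction on `botᶜ`: for an atom `A'` of `M` above `bot`, the sets containing `A'` form the
sublattice `(· ∪ A') '' M`, and every other `A ∈ M` meets `A'` in `bot`, so that modularity gives
`c A = c (A ∪ A') + c bot - c A'`. -/
theorem IsSublattice.exists_card_le_mem_span_of_modular {M : Set (Finset α)}
    (hM : IsSublattice M) {c : Finset α → V}
    (hc : ∀ A ∈ M, ∀ B ∈ M, c (A ∪ B) + c (A ∩ B) = c A + c B) {bot : Finset α}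
    (hbot : bot ∈ lowerBounds M) :
    ∃ T : Finset V, #T ≤ #botᶜ + 1 ∧ ∀ A ∈ M, c A ∈ Submodule.span R (T : Set V) := by
  classical
  induction hn : #botᶜ using Nat.strong_induction_on generalizing M bot with
  | _ n ih =>
    rcases (M \ {bot}).eq_empty_or_nonempty with hM' | hM'
    · refine ⟨{c bot}, by simp, fun A hA => Submodule.subset_span ?_⟩
      have : A = bot := by simpa using Set.sdiff_eq_empty.mp hM' hA
      simp [this]
    obtain ⟨A', ⟨hA'M, hA'bot⟩, hA'min⟩ := (M \ {bot}).toFinite.exists_minimal hM'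
    have hlt : #A'ᶜ < n :=
      hn ▸ card_lt_card (compl_ssubset_compl.mpr (lt_of_le_of_ne (hbot hA'M) (Ne.symm hA'bot)))
    obtain ⟨T, hT, hspan⟩ := ih _ hlt (hM.image_sup_right A')
      (fun _ ⟨A, hA, hA'⟩ _ ⟨B, hB, hB'⟩ => hc _ (hA' ▸ hM.supClosed hA hA'M) _
        (hB' ▸ hM.supClosed hB hA'M))
      (by rintro _ ⟨A, -, rfl⟩; exact le_sup_right) rfl
    have hmono := Submodule.span_mono (R := R) (coe_subset.mpr (subset_insert (c bot) T))
    refine ⟨insert (c bot) T, (card_insert_le _ _).trans (by omega), fun A hA => ?_⟩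
    by_cases hA'A : A' ⊆ A
    · exact hmono (hspan A ⟨A, hA, union_eq_left.mpr hA'A⟩)
    have hmeet : A ∩ A' = bot := by
      by_contra hne
      exact hA'A ((hA'min ⟨hM.infClosed hA hA'M, hne⟩ inter_subset_right).trans inter_subset_left)
    have hcA : c A = c (A ∪ A') + c bot - c A' := by
      rw [← hmeet, hc A hA A' hA'M, add_sub_cancel_right]
    rw [hcA]
    exact sub_mem (add_mem (hmono (hspan _ ⟨A, hA, rfl⟩)) (Submodule.subset_span (by simp)))
      (hmono (hspan A' ⟨A', hA'M, union_self A'⟩))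

end ModularOnLattice

section Submodular

variable {N : ℕ} {ι : Type*} [Fintype ι] {f : ι → Finset (Fin N) → ℝ}

theorem submodular_dotProduct (hf : ∀ s, Submodular (f s)) {lam : ι → ℝ} (hlam : 0 ≤ lam) :
    Submodular fun A => lam ⬝ᵥ (f · A) := fun A B => by
  simpa only [dotProduct_add] using dotProduct_le_dotProduct_of_nonneg_left
    (u := (f · (A ∪ B)) + (f · (A ∩ B))) (v := (f · A) + (f · B)) (fun s => hf s A B) hlam

theorem Submodular.isSublattice_setOf_eq {g : Finset (Fin N) → ℝ} (hg : Submodular g) {v : ℝ}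
    (hv : ∀ A, v ≤ g A) : IsSublattice {A | g A = v} := by
  have key : ∀ A B, g A = v → g B = v → g (A ∪ B) = v ∧ g (A ∩ B) = v := fun A B hA hB => by
    have := hg A B
    constructor <;> linarith [hv (A ∪ B), hv (A ∩ B)]
  exact ⟨fun A hA B hB => (key A B hA hB).1, fun A hA B hB => (key A B hA hB).2⟩

theorem modular_mul_of_dotProduct_le (hf : ∀ s, Submodular (f s)) {lam : ι → ℝ} (hlam : 0 ≤ lam)
    {A B : Finset (Fin N)}
    (h : lam ⬝ᵥ (f · A) + lam ⬝ᵥ (f · B) ≤ lam ⬝ᵥ (f · (A ∪ B)) + lam ⬝ᵥ (f · (A ∩ B))) :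
    lam * (f · (A ∪ B)) + lam * (f · (A ∩ B)) = lam * (f · A) + lam * (f · B) := by
  have hle : ∀ s ∈ univ, lam s * (f s (A ∪ B) + f s (A ∩ B)) ≤ lam s * (f s A + f s B) :=
    fun s _ => mul_le_mul_of_nonneg_left (hf s A B) (hlam s)
  have heq := (sum_eq_sum_iff_of_le hle).mp <| (sum_le_sum hle).antisymm <| by
    simpa only [dotProduct, mul_add, sum_add_distrib] using h
  funext s
  simpa only [Pi.add_apply, Pi.mul_apply, mul_add] using heq s (mem_univ s)

end Submodular

section Payoff

variable {ι α : Type*} [Fintype ι]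

noncomputable def minPayoff (f : ι → α → ℝ) (lam : ι → ℝ) : ℝ :=
  ⨅ A, lam ⬝ᵥ (f · A)

variable {f : ι → α → ℝ}

theorem minPayoff_smul {c : ℝ} (hc : 0 ≤ c) (lam : ι → ℝ) :
    minPayoff f (c • lam) = c * minPayoff f lam := by
  simp only [minPayoff, smul_dotProduct, smul_eq_mul, Real.mul_iInf_of_nonneg hc]

variable [Finite α]

theorem le_minPayoff_iff [Nonempty α] {lam : ι → ℝ} {v : ℝ} :
    v ≤ minPayoff f lam ↔ ∀ A, v ≤ lam ⬝ᵥ (f · A) :=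
  le_ciInf_iff (Set.finite_range _).bddBelow

theorem upperSemicontinuous_minPayoff : UpperSemicontinuous (minPayoff f) :=
  upperSemicontinuous_ciInf (fun _ => (Set.finite_range _).bddBelow) fun _ =>
    (continuous_id.dotProduct continuous_const).upperSemicontinuous

end Payoff

theorem eventually_forall_le_add_smul_dotProduct {ι κ : Type*} [Fintype ι] [Finite κ]
    {F : κ → ι → ℝ} {x e : ι → ℝ} {v : ℝ} (hx : ∀ k, v ≤ x ⬝ᵥ F k)
    (he : ∀ k, x ⬝ᵥ F k = v → e ⬝ᵥ F k = 0) :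
    ∀ᶠ ε in 𝓝 (0 : ℝ), ∀ k, v ≤ (x + ε • e) ⬝ᵥ F k := by
  refine eventually_all.mpr fun k => ?_
  simp only [add_dotProduct, smul_dotProduct, smul_eq_mul]
  rcases (hx k).eq_or_lt with h | h
  · exact Eventually.of_forall fun ε => by rw [he k h.symm, ← h, mul_zero, add_zero]
  · have hcont : Continuous fun ε : ℝ => x ⬝ᵥ F k + ε * e ⬝ᵥ F k := by fun_prop
    exact (hcont.tendsto' 0 _ (by simp)).eventually (lt_mem_nhds h) |>.mono fun _ => le_of_lt

theorem eq_zero_of_mem_extremePoints_of_eventually_add_smul_mem {E : Type*} [AddCommGroup E]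
    [Module ℝ E] {A : Set E} {x e : E} (hx : x ∈ A.extremePoints ℝ)
    (he : ∀ᶠ ε in 𝓝 (0 : ℝ), x + ε • e ∈ A) : e = 0 := by
  obtain ⟨δ, hδ, h⟩ := Metric.eventually_nhds_iff.mp he
  have hδ₂ : |δ| / 2 < δ := by rw [abs_of_pos hδ]; exact half_lt_self hδ
  have h₁ : x + (δ / 2) • e ∈ A := h (by simpa using hδ₂)
  have h₂ : x - (δ / 2) • e ∈ A := by
    simpa [sub_eq_add_neg] using h (y := -(δ / 2)) (by simpa using hδ₂)
  have := hx.2 h₁ h₂ (mem_openSegment_add_sub x ((δ / 2) • e))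
  simpa [hδ.ne'] using this

section OptimalFace

variable {ι α : Type*} [Fintype ι] {f : ι → α → ℝ} {v : ℝ} {lam e : ι → ℝ}

/-- Rescaling `lam + ε • e` to total mass one and using maximality gives
`v ≤ v * (1 + ε * ∑ e)`, so `ε ↦ ε * ∑ e` has a local minimum at `0`. -/
theorem sum_eq_zero_of_eventually_le_minPayoff_add_smul (hv : 0 < v)
    (hmax : ∀ μ ∈ stdSimplex ℝ ι, minPayoff f μ ≤ v) (hlam : ∑ i, lam i = 1)
    (he : ∀ᶠ ε in 𝓝 (0 : ℝ), 0 ≤ lam + ε • e ∧ v ≤ minPayoff f (lam + ε • e)) :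
    ∑ i, e i = 0 := by
  set σ := ∑ i, e i
  have hmass : ∀ ε : ℝ, ∑ i, (lam + ε • e) i = 1 + ε * σ := fun ε => by
    simp only [Pi.add_apply, Pi.smul_apply, smul_eq_mul, sum_add_distrib, ← mul_sum, hlam, σ]
  have hpos : ∀ᶠ ε in 𝓝 (0 : ℝ), 0 < 1 + ε * σ :=
    ((by fun_prop : Continuous fun ε : ℝ => 1 + ε * σ).tendsto' 0 1 (by simp)).eventually
      (lt_mem_nhds one_pos)
  have hmin : IsLocalMin (fun ε => ε * σ) 0 := by
    filter_upwards [he, hpos] with ε ⟨hnonneg, hval⟩ hpos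
    have hμ : (1 + ε * σ)⁻¹ • (lam + ε • e) ∈ stdSimplex ℝ ι :=
      ⟨fun i => mul_nonneg (inv_nonneg.mpr hpos.le) (hnonneg i), by
        simp only [Pi.smul_apply, smul_eq_mul, ← mul_sum, hmass, inv_mul_cancel₀ hpos.ne']⟩
    have := hmax _ hμ
    rw [minPayoff_smul (inv_nonneg.mpr hpos.le), inv_mul_le_iff₀ hpos] at this
    nlinarith
  simpa using hmin.hasDerivAt_eq_zero (hasDerivAt_mul_const σ)

variable [Finite α] [Nonempty α]

theorem eq_zero_of_mem_extremePoints_setOf_le_minPayoff (hv : 0 < v)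
    (hmax : ∀ μ ∈ stdSimplex ℝ ι, minPayoff f μ ≤ v)
    (hlam : lam ∈ {μ ∈ stdSimplex ℝ ι | v ≤ minPayoff f μ}.extremePoints ℝ)
    (hsupp : ∀ i, lam i = 0 → e i = 0) (htight : ∀ A, lam ⬝ᵥ (f · A) = v → e ⬝ᵥ (f · A) = 0) :
    e = 0 := by
  classical
  obtain ⟨⟨hnonneg, hsum⟩, hopt⟩ := hlam.1
  have hfeas : ∀ᶠ ε in 𝓝 (0 : ℝ), 0 ≤ lam + ε • e ∧ v ≤ minPayoff f (lam + ε • e) := by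
    have hcoord := eventually_forall_le_add_smul_dotProduct (F := fun i => Pi.single i 1)
      (x := lam) (e := e) (v := 0) (by simpa using hnonneg) (by simpa using hsupp)
    have hcut := eventually_forall_le_add_smul_dotProduct (F := fun A => (f · A)) (x := lam)
      (e := e) (le_minPayoff_iff.mp hopt) htight
    filter_upwards [hcoord, hcut] with ε h₁ h₂
    exact ⟨fun i => by simpa using h₁ i, le_minPayoff_iff.mpr h₂⟩
  have hσ := sum_eq_zero_of_eventually_le_minPayoff_add_smul hv hmax hsum hfeas
  refine eq_zero_of_mem_extremePoints_of_eventually_add_smul_mem hlam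
    (hfeas.mono fun ε ⟨h₁, h₂⟩ => ⟨⟨h₁, ?_⟩, h₂⟩)
  simp only [Pi.add_apply, Pi.smul_apply, smul_eq_mul, sum_add_distrib, ← mul_sum, hsum, hσ,
    mul_zero, add_zero]

end OptimalFace

section SparseOptimum

variable {N : ℕ} {ι : Type*} [Fintype ι] {f : ι → Finset (Fin N) → ℝ}

theorem exists_ne_zero_forall_tight_dotProduct_eq_zero (hsub : ∀ s, Submodular (f s))
    {lam : ι → ℝ} (hnonneg : 0 ≤ lam) {v : ℝ} (hopt : ∀ A, v ≤ lam ⬝ᵥ (f · A))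
    (hS : N + 1 < #{i | lam i ≠ 0}) :
    ∃ e ≠ 0, (∀ i, lam i = 0 → e i = 0) ∧ ∀ A, lam ⬝ᵥ (f · A) = v → e ⬝ᵥ (f · A) = 0 := by
  classical
  have hM := (submodular_dotProduct hsub hnonneg).isSublattice_setOf_eq hopt
  obtain ⟨T, hT, hspan⟩ := hM.exists_card_le_mem_span_of_modular (R := ℝ)
    (c := fun A => lam * (f · A)) (bot := ∅) (fun A hA B hB => by
      have hAB : lam ⬝ᵥ (f · (A ∪ B)) = v := hM.supClosed hA hB
      have hAB' : lam ⬝ᵥ (f · (A ∩ B)) = v := hM.infClosed hA hB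
      exact modular_mul_of_dotProduct_le hsub hnonneg (by rw [hA, hB, hAB, hAB']))
    (fun _ _ => empty_subset _)
  obtain ⟨d, hd0, hdS, hdT⟩ :=
    exists_ne_zero_support_subset_forall_dotProduct_eq_zero {i | lam i ≠ 0} T (by
      rw [compl_empty, card_univ, Fintype.card_fin] at hT; omega)
  refine ⟨lam * d, fun h => hd0 (funext fun i => ?_), fun i hi => by simp [hi], fun A hA => ?_⟩
  · by_contra hi
    have hlami : lam i ≠ 0 := by simpa using not_imp_comm.mp (hdS i) hi
    exact mul_ne_zero hlami hi (congrFun h i)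
  · rw [← dotProduct_eq_zero_of_mem_span hdT (hspan A hA)]
    simp only [dotProduct, Pi.mul_apply, mul_right_comm]

theorem card_support_le_of_mem_extremePoints (hsub : ∀ s, Submodular (f s)) {v : ℝ} (hv : 0 < v)
    (hmax : ∀ μ ∈ stdSimplex ℝ ι, minPayoff f μ ≤ v) {lam : ι → ℝ}
    (hlam : lam ∈ {μ ∈ stdSimplex ℝ ι | v ≤ minPayoff f μ}.extremePoints ℝ) :
    #{i | lam i ≠ 0} ≤ N + 1 := by
  by_contra! hS
  obtain ⟨e, he0, hsupp, htight⟩ := exists_ne_zero_forall_tight_dotProduct_eq_zero hsub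
    hlam.1.1.1 (le_minPayoff_iff.mp hlam.1.2) hS
  exact he0 (eq_zero_of_mem_extremePoints_setOf_le_minPayoff hv hmax hlam hsupp htight)

theorem exists_isMaxOn_minPayoff_ncard_support_le [Nonempty ι] (hf0 : ∀ s A, 0 ≤ f s A)
    (hsub : ∀ s, Submodular (f s)) :
    ∃ lam ∈ stdSimplex ℝ ι, {i | lam i ≠ 0}.ncard ≤ N + 1 ∧
      IsMaxOn (minPayoff f) (stdSimplex ℝ ι) lam := by
  classical
  obtain ⟨lstar, hlstar, hmax⟩ :=
    ((upperSemicontinuous_minPayoff (f := f)).upperSemicontinuousOn _).exists_isMaxOn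
      ⟨_, single_mem_stdSimplex ℝ (Classical.arbitrary ι)⟩ (isCompact_stdSimplex ℝ ι)
  by_cases hv : 0 < minPayoff f lstar
  · have hface : IsCompact {μ ∈ stdSimplex ℝ ι | minPayoff f lstar ≤ minPayoff f μ} :=
      (isCompact_stdSimplex ℝ ι).inter_right
        (upperSemicontinuous_minPayoff.isClosed_preimage (minPayoff f lstar))
    obtain ⟨lam, hlam⟩ := hface.extremePoints_nonempty ⟨lstar, hlstar, le_rfl⟩
    refine ⟨lam, hlam.1.1, ?_, isMaxOn_iff.mpr fun μ hμ => (hmax hμ).trans hlam.1.2⟩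
    rw [Set.ncard_eq_toFinset_card', Set.toFinset_ofPred]
    exact card_support_le_of_mem_extremePoints hsub hv (fun μ hμ => hmax hμ) hlam
  · obtain ⟨i⟩ := ‹Nonempty ι›
    refine ⟨Pi.single i 1, single_mem_stdSimplex ℝ i, ?_,
      isMaxOn_iff.mpr fun μ hμ => (hmax hμ).trans ?_⟩
    · rw [← Function.support, Pi.support_single_of_ne one_ne_zero, Set.ncard_singleton]
      omega
    · exact (not_lt.mp hv).trans (le_minPayoff_iff.mpr fun A =>
        dotProduct_nonneg_of_nonneg (single_mem_stdSimplex ℝ i).1 fun s => hf0 s A)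

end SparseOptimum

/-- For the bilinear max-min problem `max_λ min_A ∑_s λ_s f_s(A)` over the probability
simplex on the `2^N` relay states, with `f_s` nonnegative and submodular, the optimal
value is unchanged when restricting to `λ` with at most `N+1` nonzero entries
(simple schedules). -/
theorem simple_schedules_optimal {N : ℕ}
    (f : (Fin N → Bool) → Finset (Fin N) → ℝ)
    (hf0 : ∀ s A, 0 ≤ f s A) (hsub : ∀ s, Submodular (f s)) :
    sSup {v : ℝ | ∃ lam : (Fin N → Bool) → ℝ,
        (∀ s, 0 ≤ lam s) ∧ (∑ s, lam s = 1) ∧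
        v = ⨅ A : Finset (Fin N), ∑ s, lam s * f s A}
    = sSup {v : ℝ | ∃ lam : (Fin N → Bool) → ℝ,
        (∀ s, 0 ≤ lam s) ∧ (∑ s, lam s = 1) ∧ {s | lam s ≠ 0}.ncard ≤ N + 1 ∧
        v = ⨅ A : Finset (Fin N), ∑ s, lam s * f s A} := by
  obtain ⟨lam, ⟨hnonneg, hsum⟩, hcard, hmax⟩ := exists_isMaxOn_minPayoff_ncard_support_le hf0 hsub
  refine (IsGreatest.csSup_eq (a := minPayoff f lam) ⟨?_, ?_⟩).trans
    (IsGreatest.csSup_eq ⟨?_, ?_⟩).symm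
  · exact ⟨lam, hnonneg, hsum, rfl⟩
  · rintro _ ⟨μ, h₀, h₁, rfl⟩
    exact hmax ⟨h₀, h₁⟩
  · exact ⟨lam, hnonneg, hsum, hcard, rfl⟩
  · rintro _ ⟨μ, h₀, h₁, -, rfl⟩
    exact hmax ⟨h₀, h₁⟩
end

section
/- Let γ > 0, A = log(1+2γ), B = log(1+4γ), C = log(1+γ). Then max over probability vectors (λ_{00}, λ_{01}, λ_{10}, λ_{11}) of min{ (λ_{01}+λ_{10})·C + λ_{11}·B , λ_{00}·A + (λ_{01}+λ_{10})·C } equals max{ C , AB/(A+B) }. -/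
/-!
Averaging the two rates with weights `A` and `B` cancels the `λ₀₀` and `λ₁₁` terms against each
other: `A r₁ + B r₂ = (A + B)(λ₀₁ + λ₁₀) C + A B (λ₀₀ + λ₁₁)`, a convex combination of `C` and
`AB/(A+B)` scaled by `A + B`. Hence `min r₁ r₂ ≤ max C (AB/(A+B))`, and the two extreme schedules
(all time on `λ₀₁`, or `λ₀₀ = B/(A+B)`, `λ₁₁ = A/(A+B)`) attain `C` and `AB/(A+B)`.
-/

namespace LineNetwork

lemma mul_min_le_add_mul {a b x y : ℝ} (ha : 0 ≤ a) (hb : 0 ≤ b) :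
    (a + b) * min x y ≤ a * x + b * y := by
  nlinarith [mul_le_mul_of_nonneg_left (min_le_left x y) ha,
    mul_le_mul_of_nonneg_left (min_le_right x y) hb]

variable {A B C : ℝ}

lemma min_rates_le_max (hA : 0 < A) (hB : 0 < B) {l00 l01 l10 l11 : ℝ}
    (h00 : 0 ≤ l00) (h01 : 0 ≤ l01) (h10 : 0 ≤ l10) (h11 : 0 ≤ l11)
    (hsum : l00 + l01 + l10 + l11 = 1) :
    min ((l01 + l10) * C + l11 * B) (l00 * A + (l01 + l10) * C) ≤ max C (A * B / (A + B)) := by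
  have hAB : 0 < A + B := by positivity
  set M := max C (A * B / (A + B))
  have hweighted : (A + B) * min ((l01 + l10) * C + l11 * B) (l00 * A + (l01 + l10) * C) ≤
      (A + B) * ((l01 + l10) * C + (l00 + l11) * (A * B / (A + B))) :=
    calc _ ≤ A * ((l01 + l10) * C + l11 * B) + B * (l00 * A + (l01 + l10) * C) :=
          mul_min_le_add_mul hA.le hB.le
      _ = _ := by field_simp; ring
  have hconvex : (l01 + l10) * C + (l00 + l11) * (A * B / (A + B)) ≤ M :=
    calc _ ≤ (l01 + l10) * M + (l00 + l11) * M := by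
          gcongr
          exacts [le_max_left _ _, le_max_right _ _]
      _ = M := by rw [← add_mul]; linear_combination M * hsum
  exact (le_of_mul_le_mul_left hweighted hAB).trans hconvex

lemma time_sharing_rate (hA : 0 < A) (hB : 0 < B) :
    min ((0 + 0) * C + A / (A + B) * B) (B / (A + B) * A + (0 + 0) * C) = A * B / (A + B) := by
  have hAB : A + B ≠ 0 := by positivity
  rw [show B / (A + B) * A = A / (A + B) * B by field_simp]
  simp only [add_zero, zero_mul, zero_add, min_self]
  field_simp

theorem isGreatest_min_rates (hA : 0 < A) (hB : 0 < B) :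
    IsGreatest {v : ℝ | ∃ l00 l01 l10 l11 : ℝ,
        0 ≤ l00 ∧ 0 ≤ l01 ∧ 0 ≤ l10 ∧ 0 ≤ l11 ∧ l00 + l01 + l10 + l11 = 1 ∧
        v = min ((l01 + l10) * C + l11 * B) (l00 * A + (l01 + l10) * C)}
      (max C (A * B / (A + B))) := by
  refine ⟨?_, ?_⟩
  · rcases le_total (A * B / (A + B)) C with hC | hC
    · exact ⟨0, 1, 0, 0, le_rfl, zero_le_one, le_rfl, le_rfl, by ring, by simp [max_eq_left hC]⟩
    · refine ⟨B / (A + B), 0, 0, A / (A + B), by positivity, le_rfl, le_rfl, by positivity,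
        by field_simp; ring, ?_⟩
      rw [max_eq_right hC, time_sharing_rate hA hB]
  · rintro v ⟨l00, l01, l10, l11, h00, h01, h10, h11, hsum, rfl⟩
    exact min_rates_le_max hA hB h00 h01 h10 h11 hsum

end LineNetwork

theorem line_network_example2_general (γ : ℝ) (hγ : 0 < γ) (A B C : ℝ)
    (hA : A = Real.log (1 + 2 * γ)) (hB : B = Real.log (1 + 4 * γ)) :
    IsGreatest {v : ℝ | ∃ l00 l01 l10 l11 : ℝ,
        0 ≤ l00 ∧ 0 ≤ l01 ∧ 0 ≤ l10 ∧ 0 ≤ l11 ∧ l00 + l01 + l10 + l11 = 1 ∧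
        v = min ((l01 + l10) * C + l11 * B) (l00 * A + (l01 + l10) * C)}
      (max C (A * B / (A + B))) := by
  have hApos : 0 < A := hA ▸ Real.log_pos (by linarith)
  have hBpos : 0 < B := hB ▸ Real.log_pos (by linarith)
  exact LineNetwork.isGreatest_min_rates hApos hBpos

/-- Example 2 of the line network: with `A = log(1+2γ)`, `B = log(1+4γ)`,
`C = log(1+γ)`, the max over probability vectors of
`min {(λ₀₁+λ₁₀)C + λ₁₁B, λ₀₀A + (λ₀₁+λ₁₀)C}` equals `max {C, AB/(A+B)}`. -/
theorem line_network_example2 (γ : ℝ) (hγ : 0 < γ) (A B C : ℝ)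
    (hA : A = Real.log (1 + 2 * γ)) (hB : B = Real.log (1 + 4 * γ))
    (hC : C = Real.log (1 + γ)) :
    IsGreatest {v : ℝ | ∃ l00 l01 l10 l11 : ℝ,
        0 ≤ l00 ∧ 0 ≤ l01 ∧ 0 ≤ l10 ∧ 0 ≤ l11 ∧ l00 + l01 + l10 + l11 = 1 ∧
        v = min ((l01 + l10) * C + l11 * B) (l00 * A + (l01 + l10) * C)}
      (max C (A * B / (A + B))) :=
  line_network_example2_general γ hγ A B C hA hB
end
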